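/- Let n ≥ 2 be an integer, take h ≡ 0, and for a < 0 define ū_a(r) = −2ar/(1 + ar²) on [0, 1/√|a|). Then ū_a is a C² solution of the ODE u''(r) + ((n-1)/r)u'(r) − (n-2)u(r)³ − (2(n-1)/r)u(r)² − ((n-1)/r²)u(r) + (n-4)u(r)u'(r) = 0 with ū_a(0) = 0, ū_a'(0) = −2a > 0, and ū_a(r) → +∞ as r → 1/√|a|; in particular ū_a is not global. -/

import Mathlib

/-- The ODE (equaz): `u'' + ((n-1)/r)u' - (n-2)u³ - (2(n-1)/r)u² - ((n-1)/r²)u + (n-4)uu'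
    = [u' + u/r]·h(r)`, stated pointwise at `r`. -/
def Equaz (n : ℕ) (h u u' u'' : ℝ → ℝ) (r : ℝ) : Prop :=
  u'' r + ((n : ℝ) - 1) / r * u' r - ((n : ℝ) - 2) * u r ^ 3
    - 2 * ((n : ℝ) - 1) / r * u r ^ 2 - ((n : ℝ) - 1) / r ^ 2 * u r
    + ((n : ℝ) - 4) * u r * u' r = (u' r + u r / r) * h r

/-- The explicit function `ū_a(r) = -2ar/(1 + ar²)`. -/
noncomputable def ubar (a : ℝ) : ℝ → ℝ := fun r => -(2 * a * r) / (1 + a * r ^ 2)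

/-!
`ū_a` is a rational function; differentiating it twice and clearing denominators shows
that it solves (equaz) with `h ≡ 0` wherever `r ≠ 0` and `1 + a r² ≠ 0`, for every `n`. For
`a < 0` the denominator `1 + a r²` is positive on `(-1/√|a|, 1/√|a|)` and vanishes at
`1/√|a|`, while the numerator `-2ar` stays positive there, so `ū_a → +∞` at the endpoint.
-/

open Filter Topology Set

noncomputable def ubarDeriv (a : ℝ) : ℝ → ℝ := fun r =>
  (-(2 * a) + 2 * a ^ 2 * r ^ 2) / (1 + a * r ^ 2) ^ 2

noncomputable def ubarDeriv2 (a : ℝ) : ℝ → ℝ := fun r =>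
  (12 * a ^ 2 * r - 4 * a ^ 3 * r ^ 3) / (1 + a * r ^ 2) ^ 3

section Derivatives

variable {a r : ℝ}

lemma hasDerivAt_one_add_mul_sq (a r : ℝ) :
    HasDerivAt (fun x => 1 + a * x ^ 2) (2 * a * r) r := by
  simpa [mul_comm, mul_assoc, mul_left_comm] using ((hasDerivAt_pow 2 r).const_mul a).const_add 1

lemma hasDerivAt_ubar (hD : 1 + a * r ^ 2 ≠ 0) : HasDerivAt (ubar a) (ubarDeriv a r) r := by
  have hnum : HasDerivAt (fun x : ℝ => -(2 * a * x)) (-(2 * a)) r := by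
    simpa using ((hasDerivAt_id r).const_mul (2 * a)).fun_neg
  refine (hnum.div (hasDerivAt_one_add_mul_sq a r) hD).congr_deriv ?_
  simp only [ubarDeriv]
  field_simp
  ring

lemma hasDerivAt_ubarDeriv (hD : 1 + a * r ^ 2 ≠ 0) :
    HasDerivAt (ubarDeriv a) (ubarDeriv2 a r) r := by
  have hnum : HasDerivAt (fun x : ℝ => -(2 * a) + 2 * a ^ 2 * x ^ 2) (4 * a ^ 2 * r) r :=
    (((hasDerivAt_pow 2 r).const_mul (2 * a ^ 2)).const_add (-(2 * a))).congr_deriv (by ring)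
  have hden :
      HasDerivAt (fun x : ℝ => (1 + a * x ^ 2) ^ 2) (2 * (1 + a * r ^ 2) * (2 * a * r)) r := by
    simpa using (hasDerivAt_one_add_mul_sq a r).fun_pow 2
  refine (hnum.div hden (pow_ne_zero 2 hD)).congr_deriv ?_
  simp only [ubarDeriv2]
  field_simp
  ring

lemma deriv_ubar (hD : 1 + a * r ^ 2 ≠ 0) : deriv (ubar a) r = ubarDeriv a r :=
  (hasDerivAt_ubar hD).deriv

lemma deriv_deriv_ubar (hD : 1 + a * r ^ 2 ≠ 0) : deriv (deriv (ubar a)) r = ubarDeriv2 a r := by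
  have hopen : IsOpen {x : ℝ | 1 + a * x ^ 2 ≠ 0} :=
    isOpen_compl_singleton.preimage (by fun_prop)
  have hev : deriv (ubar a) =ᶠ[𝓝 r] ubarDeriv a := by
    filter_upwards [hopen.mem_nhds hD] with x hx
    exact deriv_ubar hx
  rw [hev.deriv_eq]
  exact (hasDerivAt_ubarDeriv hD).deriv

theorem equaz_ubar (n : ℕ) (hr : r ≠ 0) (hD : 1 + a * r ^ 2 ≠ 0) :
    Equaz n (fun _ => 0) (ubar a) (deriv (ubar a)) (deriv (deriv (ubar a))) r := by
  rw [Equaz, deriv_ubar hD, deriv_deriv_ubar hD]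
  simp only [ubar, ubarDeriv, ubarDeriv2]
  field_simp
  ring

end Derivatives

section BlowUp

variable {a : ℝ}

lemma mul_one_div_sqrt_abs_sq (ha : a < 0) : a * (1 / √|a|) ^ 2 = -1 := by
  rw [div_pow, one_pow, Real.sq_sqrt (abs_nonneg a), abs_of_neg ha, mul_one_div, div_neg,
    div_self ha.ne]

lemma one_div_sqrt_abs_pos (ha : a < 0) : 0 < 1 / √|a| :=
  one_div_pos.2 (Real.sqrt_pos.2 (abs_pos.2 ha.ne))

lemma one_add_mul_sq_pos (ha : a < 0) {r : ℝ} (h₁ : -(1 / √|a|) < r) (h₂ : r < 1 / √|a|) :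
    0 < 1 + a * r ^ 2 := by
  nlinarith [sq_lt_sq' h₁ h₂, mul_one_div_sqrt_abs_sq ha]

lemma tendsto_one_add_mul_sq_nhdsGT_zero (ha : a < 0) :
    Tendsto (fun r => 1 + a * r ^ 2) (𝓝[<] (1 / √|a|)) (𝓝[>] 0) := by
  have hR := one_div_sqrt_abs_pos ha
  have hlim : Tendsto (fun r => 1 + a * r ^ 2) (𝓝 (1 / √|a|)) (𝓝 0) :=
    Continuous.tendsto' (by fun_prop) _ _ (by rw [mul_one_div_sqrt_abs_sq ha, add_neg_cancel])
  refine tendsto_nhdsWithin_of_tendsto_nhds_of_eventually_within _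
    (hlim.mono_left nhdsWithin_le_nhds) ?_
  filter_upwards [Ioo_mem_nhdsLT (by linarith : -(1 / √|a|) < 1 / √|a|)] with r hr
  exact one_add_mul_sq_pos ha hr.1 hr.2

theorem tendsto_ubar_atTop (ha : a < 0) : Tendsto (ubar a) (𝓝[<] (1 / √|a|)) atTop := by
  have hR := one_div_sqrt_abs_pos ha
  have hnum :
      Tendsto (fun r => -(2 * a * r)) (𝓝[<] (1 / √|a|)) (𝓝 (-(2 * a * (1 / √|a|)))) :=
    ((by fun_prop : Continuous fun r : ℝ => -(2 * a * r)).tendsto _).mono_left nhdsWithin_le_nhds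
  exact (hnum.pos_mul_atTop (by nlinarith)
    (tendsto_inv_nhdsGT_zero.comp (tendsto_one_add_mul_sq_nhdsGT_zero ha)))

end BlowUp

theorem ubar_blow_up_general (n : ℕ) (a : ℝ) (ha : a < 0) :
    ubar a 0 = 0 ∧
    HasDerivAt (ubar a) (-(2 * a)) 0 ∧
    0 < -(2 * a) ∧
    (∀ r : ℝ, 0 < r → r < 1 / Real.sqrt |a| →
      Equaz n (fun _ => 0) (ubar a) (deriv (ubar a)) (deriv (deriv (ubar a))) r) ∧
    Filter.Tendsto (ubar a)
      (nhdsWithin (1 / Real.sqrt |a|) (Set.Iio (1 / Real.sqrt |a|))) Filter.atTop := by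
  refine ⟨by simp [ubar], ?_, by linarith, ?_, tendsto_ubar_atTop ha⟩
  · simpa [ubarDeriv] using hasDerivAt_ubar (a := a) (r := 0) (by norm_num)
  · intro r hr hrR
    exact equaz_ubar n hr.ne' (one_add_mul_sq_pos ha (by linarith) hrR).ne'

/-- **Blow-up of `ū_a` for `a < 0`.** For `a < 0`, the function `ū_a(r) = -2ar/(1+ar²)`
    is a C² solution of (equaz) with `h ≡ 0` on `[0, 1/√|a|)`, with `ū_a(0) = 0`,
    `ū_a'(0) = -2a > 0`, and it blows up: `ū_a(r) → +∞` as `r → 1/√|a|` from the left;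
    in particular it is not global. -/
theorem ubar_blow_up (n : ℕ) (hn : 2 ≤ n) (a : ℝ) (ha : a < 0) :
    ubar a 0 = 0 ∧
    HasDerivAt (ubar a) (-(2 * a)) 0 ∧
    0 < -(2 * a) ∧
    (∀ r : ℝ, 0 < r → r < 1 / Real.sqrt |a| →
      Equaz n (fun _ => 0) (ubar a) (deriv (ubar a)) (deriv (deriv (ubar a))) r) ∧
    Filter.Tendsto (ubar a)
      (nhdsWithin (1 / Real.sqrt |a|) (Set.Iio (1 / Real.sqrt |a|))) Filter.atTop :=
  ubar_blow_up_general n a ha
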